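/- arXiv:1307.8185 — 5 statements merged into one kernel-verified Lean document; each statement's English description precedes it below -/
import Mathlib

section
/- Let M be an invertible real 2n×2n matrix. Assume that for every real symmetric positive definite n×n matrix X the matrix MᵀGM is symplectic, where G is the 2n×2n block diagonal matrix G = [[X, 0], [0, X⁻¹]]. Then M is either symplectic (MᵀJM = J) or antisymplectic (MᵀJM = −J). -/
open MeasureTheory Matrix

noncomputable section

/-- The standard symplectic matrix `J = [[0, I], [-I, 0]]` in `n×n` block form. -/
def stdJ (n : ℕ) : Matrix (Fin n ⊕ Fin n) (Fin n ⊕ Fin n) ℝ :=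
  Matrix.fromBlocks 0 1 (-1) 0

/-- The Wigner transform `Wψ(x,p) = (2πhbar)⁻ⁿ ∫ e^{-i p·y/hbar} ψ(x+y/2) conj(ψ(x-y/2)) dy`. -/
def wigner (hbar : ℝ) (n : ℕ) (ψ : (Fin n → ℝ) → ℂ) (x p : Fin n → ℝ) : ℂ :=
  (((2 * Real.pi * hbar)⁻¹ ^ n : ℝ) : ℂ) *
    ∫ y : Fin n → ℝ,
      Complex.exp (-(Complex.I * ((p ⬝ᵥ y : ℝ) : ℂ)) / (hbar : ℂ)) *
        ψ (x + (2 : ℝ)⁻¹ • y) * (starRingEnd ℂ) (ψ (x - (2 : ℝ)⁻¹ • y))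

/-- The Wigner transform as a function of `z = (x, p) ∈ ℝ²ⁿ`. -/
def wignerZ (hbar : ℝ) (n : ℕ) (ψ : (Fin n → ℝ) → ℂ) (z : (Fin n ⊕ Fin n) → ℝ) : ℂ :=
  wigner hbar n ψ (z ∘ Sum.inl) (z ∘ Sum.inr)

/-- The cross-Wigner transform `W(ψ,φ)`. -/
def crossWigner (hbar : ℝ) (n : ℕ) (ψ φ : (Fin n → ℝ) → ℂ) (x p : Fin n → ℝ) : ℂ :=
  (((2 * Real.pi * hbar)⁻¹ ^ n : ℝ) : ℂ) *
    ∫ y : Fin n → ℝ,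
      Complex.exp (-(Complex.I * ((p ⬝ᵥ y : ℝ) : ℂ)) / (hbar : ℂ)) *
        ψ (x + (2 : ℝ)⁻¹ • y) * (starRingEnd ℂ) (φ (x - (2 : ℝ)⁻¹ • y))

/-- The cross-Wigner transform as a function of `z = (x, p) ∈ ℝ²ⁿ`. -/
def crossWignerZ (hbar : ℝ) (n : ℕ) (ψ φ : (Fin n → ℝ) → ℂ) (z : (Fin n ⊕ Fin n) → ℝ) : ℂ :=
  crossWigner hbar n ψ φ (z ∘ Sum.inl) (z ∘ Sum.inr)

/-- The Gaussian `ψ_X(x) = (πhbar)^{-n/4} (det X)^{1/4} e^{-X x·x/(2hbar)}`. -/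
def gauss (hbar : ℝ) (n : ℕ) (X : Matrix (Fin n) (Fin n) ℝ) (x : Fin n → ℝ) : ℂ :=
  (((Real.pi * hbar) ^ (-(n : ℝ) / 4) * X.det ^ ((1 : ℝ) / 4) : ℝ) : ℂ) *
    Complex.exp (-((X.mulVec x ⬝ᵥ x : ℝ) : ℂ) / (2 * (hbar : ℂ)))

/-- The complex Gaussian `ψ_{X,Y}(x) = (πhbar)^{-n/4} (det X)^{1/4} e^{-(X+iY) x·x/(2hbar)}`. -/
def gaussXY (hbar : ℝ) (n : ℕ) (X Y : Matrix (Fin n) (Fin n) ℝ) (x : Fin n → ℝ) : ℂ :=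
  (((Real.pi * hbar) ^ (-(n : ℝ) / 4) * X.det ^ ((1 : ℝ) / 4) : ℝ) : ℂ) *
    Complex.exp (-(((X.mulVec x ⬝ᵥ x : ℝ) : ℂ) + Complex.I * ((Y.mulVec x ⬝ᵥ x : ℝ) : ℂ)) /
      (2 * (hbar : ℂ)))

/-- The kernel `K_a(x,y) = (2πhbar)⁻ⁿ ∫ e^{i p·(x-y)/hbar} a((x+y)/2, p) dp` of the Weyl operator. -/
def weylKernel (hbar : ℝ) (n : ℕ) (a : ((Fin n ⊕ Fin n) → ℝ) → ℂ) (x y : Fin n → ℝ) : ℂ :=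
  (((2 * Real.pi * hbar)⁻¹ ^ n : ℝ) : ℂ) *
    ∫ p : Fin n → ℝ,
      Complex.exp (Complex.I * ((p ⬝ᵥ (x - y) : ℝ) : ℂ) / (hbar : ℂ)) *
        a (Sum.elim ((2 : ℝ)⁻¹ • (x + y)) p)

/-- The Weyl operator `Â_a` with symbol `a`, acting on a function `φ` on `ℝⁿ`. -/
def weyl (hbar : ℝ) (n : ℕ) (a : ((Fin n ⊕ Fin n) → ℝ) → ℂ) (φ : (Fin n → ℝ) → ℂ)
    (x : Fin n → ℝ) : ℂ :=
  ∫ y : Fin n → ℝ, weylKernel hbar n a x y * φ y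

/-- A symplectic ball: the image of a closed Euclidean ball `B²ⁿ(r)` centered at the origin
under a linear symplectic automorphism. -/
def IsSymplecticBall (n : ℕ) (B : Set (EuclideanSpace ℝ (Fin n ⊕ Fin n))) : Prop :=
  ∃ (S : Matrix (Fin n ⊕ Fin n) (Fin n ⊕ Fin n) ℝ) (r : ℝ), 0 < r ∧
    Sᵀ * stdJ n * S = stdJ n ∧
    B = (fun z : EuclideanSpace ℝ (Fin n ⊕ Fin n) =>
      (WithLp.toLp 2 (S.mulVec z) : EuclideanSpace ℝ (Fin n ⊕ Fin n))) '' Metric.closedBall 0 r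

/-!
With `X = 1` the hypothesis reads `Mᵀ C M = J` for `C = M J Mᵀ`; comparing this with the
hypothesis for general `X` and cancelling `M` gives `G C G = C` for every
`G = [[X, 0], [0, X⁻¹]]`. Taking `X = 2` kills the diagonal blocks of `C`, while its upper right
block commutes with every positive definite `X` and is therefore scalar. Since `C` is skew,
`C = b J`. Then also `Mᵀ J M = b J`, and `Mᵀ C M = J` forces `b² = 1`.
-/

namespace Matrix

open scoped ComplexOrder

theorem fromBlocks_diag_mul_mul_fromBlocks_diag {ι κ α : Type*} [Fintype ι] [Fintype κ]
    [Semiring α] (X : Matrix ι ι α) (Y : Matrix κ κ α) (A : Matrix ι ι α) (B : Matrix ι κ α)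
    (C : Matrix κ ι α) (D : Matrix κ κ α) :
    fromBlocks X 0 0 Y * fromBlocks A B C D * fromBlocks X 0 0 Y =
      fromBlocks (X * A * X) (X * B * Y) (Y * C * X) (Y * D * Y) := by
  simp [fromBlocks_multiply, Matrix.mul_assoc]

variable {ι 𝕜 : Type*} [Fintype ι] [DecidableEq ι] [RCLike 𝕜]

theorem posDef_one_add_vecMulVec_self_star (v : ι → 𝕜) :
    (1 + vecMulVec v (star v)).PosDef :=
  PosDef.one.add_posSemidef (posSemidef_vecMulVec_self_star v)

theorem commute_vecMulVec_self_star_of_forall_posDef {A : Matrix ι ι 𝕜}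
    (hA : ∀ X : Matrix ι ι 𝕜, X.PosDef → Commute X A) (v : ι → 𝕜) :
    Commute (vecMulVec v (star v)) A := by
  simpa using (hA _ (posDef_one_add_vecMulVec_self_star v)).sub_left (hA 1 PosDef.one)

theorem mem_range_scalar_of_forall_posDef_commute {A : Matrix ι ι 𝕜}
    (hA : ∀ X : Matrix ι ι 𝕜, X.PosDef → Commute X A) : A ∈ Set.range (scalar ι) := by
  refine mem_range_scalar_of_commute_single fun i j hij => ?_
  have hV := commute_vecMulVec_self_star_of_forall_posDef hA
  have hsingle : single i j (1 : 𝕜) = vecMulVec (Pi.single i 1) (star (Pi.single i 1)) *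
      vecMulVec (Pi.single i 1 + Pi.single j 1) (star (Pi.single i 1 + Pi.single j 1)) *
      vecMulVec (Pi.single j 1) (star (Pi.single j 1)) := by
    simp [vecMulVec_mul_vecMulVec, single_eq_single_vecMulVec_single, hij.symm]
  dsimp only
  rw [hsingle]
  exact ((hV _).mul_left (hV _)).mul_left (hV _)

theorem eq_of_transpose_mul_mul_eq {R : Type*} [CommRing R] {M A B : Matrix ι ι R}
    (hM : IsUnit M) (h : Mᵀ * A * M = Mᵀ * B * M) : A = B :=
  (M.isUnit_transpose.mpr hM).mul_left_cancel (hM.mul_right_cancel h)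

end Matrix

section StdJ

variable {n : ℕ}

theorem stdJ_eq_neg_J : stdJ n = -J (Fin n) ℝ := by
  simp [stdJ, J, fromBlocks_neg]

theorem stdJ_transpose : (stdJ n)ᵀ = -stdJ n := by
  rw [stdJ_eq_neg_J, transpose_neg, J_transpose]

theorem stdJ_mul_stdJ : stdJ n * stdJ n = -1 := by
  rw [stdJ_eq_neg_J, neg_mul_neg, J_squared]

theorem isUnit_stdJ : IsUnit (stdJ n) :=
  IsUnit.of_mul_eq_one (-stdJ n) (by rw [mul_neg, stdJ_mul_stdJ, neg_neg])

theorem smul_stdJ_injective (hn : 0 < n) : Function.Injective fun b : ℝ => b • stdJ n := by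
  intro a b hab
  simpa [stdJ] using congr_fun₂ hab (Sum.inl ⟨0, hn⟩) (Sum.inr ⟨0, hn⟩)

theorem exists_eq_smul_stdJ_of_forall_posDef {C : Matrix (Fin n ⊕ Fin n) (Fin n ⊕ Fin n) ℝ}
    (hC : Cᵀ = -C)
    (h : ∀ X : Matrix (Fin n) (Fin n) ℝ, X.PosDef →
      fromBlocks X 0 0 X⁻¹ * C * fromBlocks X 0 0 X⁻¹ = C) :
    ∃ b : ℝ, C = b • stdJ n := by
  obtain ⟨A, B, B', D, rfl⟩ : ∃ A B B' D, C = fromBlocks A B B' D :=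
    ⟨_, _, _, _, (fromBlocks_toBlocks C).symm⟩
  simp only [fromBlocks_diag_mul_mul_fromBlocks_diag, fromBlocks_inj] at h
  have eq_zero {c : ℝ} {E : Matrix (Fin n) (Fin n) ℝ} (hc : c ≠ 1) (hE : c • E = E) : E = 0 :=
    (smul_eq_zero.mp (by rw [sub_smul, one_smul, hE, sub_self])).resolve_left (sub_ne_zero.mpr hc)
  have hinv : ((2 : ℝ) • (1 : Matrix (Fin n) (Fin n) ℝ))⁻¹ = (2⁻¹ : ℝ) • 1 :=
    inv_eq_right_inv (by simp [smul_smul])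
  obtain ⟨hA, -, -, hD⟩ := h ((2 : ℝ) • 1) (PosDef.one.smul two_pos)
  simp only [hinv, smul_mul_assoc, mul_smul_comm, Matrix.one_mul, Matrix.mul_one, smul_smul]
    at hA hD
  obtain rfl := eq_zero (by norm_num) hA
  obtain rfl := eq_zero (by norm_num) hD
  have hB (X : Matrix (Fin n) (Fin n) ℝ) (hX : X.PosDef) : Commute X B := by
    let := hX.isUnit.invertible
    exact (mul_inv_eq_iff_eq_mul_of_invertible X _ _).mp (h X hX).2.1
  obtain ⟨b, rfl⟩ := mem_range_scalar_of_forall_posDef_commute hB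
  rw [fromBlocks_transpose, fromBlocks_neg, fromBlocks_inj] at hC
  refine ⟨b, ?_⟩
  rw [← neg_neg B', ← hC.2.2.1]
  simp [stdJ, fromBlocks_smul, smul_one_eq_diagonal]

theorem transpose_mul_stdJ_mul_eq_smul {M : Matrix (Fin n ⊕ Fin n) (Fin n ⊕ Fin n) ℝ}
    (hM : IsUnit M) {b : ℝ} (h : M * stdJ n * Mᵀ = b • stdJ n) :
    Mᵀ * stdJ n * M = b • stdJ n := by
  apply (hM.mul isUnit_stdJ).mul_left_cancel
  calc M * stdJ n * (Mᵀ * stdJ n * M) = M * stdJ n * Mᵀ * stdJ n * M := by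
        simp only [Matrix.mul_assoc]
    _ = M * stdJ n * (b • stdJ n) := by
        rw [h, smul_mul_assoc, stdJ_mul_stdJ, Matrix.mul_smul, Matrix.mul_assoc, stdJ_mul_stdJ]
        simp

end StdJ

/-- If `MᵀGM` is symplectic for every `G = [[X,0],[0,X⁻¹]]` with `X` symmetric
positive definite, then `M` is symplectic or antisymplectic. -/
theorem maximal_covariance_lemma (n : ℕ) (M : Matrix (Fin n ⊕ Fin n) (Fin n ⊕ Fin n) ℝ)
    (hM : IsUnit M.det)
    (h : ∀ X : Matrix (Fin n) (Fin n) ℝ, X.IsSymm → X.PosDef →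
      (Mᵀ * Matrix.fromBlocks X 0 0 X⁻¹ * M)ᵀ * stdJ n *
        (Mᵀ * Matrix.fromBlocks X 0 0 X⁻¹ * M) = stdJ n) :
    Mᵀ * stdJ n * M = stdJ n ∨ Mᵀ * stdJ n * M = -stdJ n := by
  obtain rfl | hn := n.eq_zero_or_pos
  · exact Or.inl (Subsingleton.elim _ _)
  have hMu : IsUnit M := (isUnit_iff_isUnit_det M).mpr hM
  set C := M * stdJ n * Mᵀ
  have hC : Mᵀ * C * M = stdJ n := by
    simpa [C, Matrix.mul_assoc] using h 1 isSymm_one PosDef.one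
  have hCskew : Cᵀ = -C := by simp [C, stdJ_transpose, Matrix.mul_assoc]
  have hGCG (X : Matrix (Fin n) (Fin n) ℝ) (hX : X.PosDef) :
      fromBlocks X 0 0 X⁻¹ * C * fromBlocks X 0 0 X⁻¹ = C := by
    have hXs : X.IsSymm := isHermitian_iff_isSymm.mp hX.isHermitian
    have hG : (fromBlocks X 0 0 X⁻¹)ᵀ = fromBlocks X 0 0 X⁻¹ := by
      rw [fromBlocks_transpose, transpose_nonsing_inv, hXs.eq, transpose_zero]
    refine eq_of_transpose_mul_mul_eq hMu ?_
    rw [hC, ← h X hXs hX]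
    simp only [transpose_mul, transpose_transpose, hG, C, Matrix.mul_assoc]
  obtain ⟨b, hb⟩ := exists_eq_smul_stdJ_of_forall_posDef hCskew hGCG
  have hN := transpose_mul_stdJ_mul_eq_smul hMu hb
  rw [hb, Matrix.mul_smul, Matrix.smul_mul, hN, smul_smul] at hC
  rcases mul_self_eq_one_iff.mp (smul_stdJ_injective hn (hC.trans (one_smul _ _).symm))
    with rfl | rfl
  · exact Or.inl (by simpa using hN)
  · exact Or.inr (by simpa using hN)

end
end

section
/- Let X be a real symmetric positive definite n×n matrix and let ψ_X be the Gaussian ψ_X(x) = (πħ)^{−n/4} (det X)^{1/4} e^{−(X x·x)/(2ħ)}. Then for all (x, p) ∈ ℝ²ⁿ, Wψ_X(x, p) = (πħ)⁻ⁿ e^{−(X x·x + X⁻¹ p·p)/ħ}; equivalently Wψ_X(z) = (πħ)⁻ⁿ e^{−(G z·z)/ħ} where G is the block diagonal matrix [[X, 0], [0, X⁻¹]]. -/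
open MeasureTheory Matrix

noncomputable section

/-!
Since `ψ_X` is real, the integrand of `Wψ_X(x, p)` is `e^{-i p·y/ħ} ψ_X(x + y/2) ψ_X(x - y/2)`, and
the parallelogram identity `X(x + y/2)·(x + y/2) + X(x - y/2)·(x - y/2) = 2 Xx·x + Xy·y/2` splits
it into `e^{-Xx·x/ħ}` times the Fourier transform at `p/ħ` of the Gaussian `e^{-Xy·y/(4ħ)}`.
That transform is computed by diagonalising `X` with an orthogonal, hence volume preserving,
change of variables, which reduces it to a product of one-dimensional Gaussian integrals; the
factor `(det X)^{-1/2}` it produces cancels the normalisation `(det X)^{1/4}` of `ψ_X`.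
-/

section

variable {ι : Type*} [Fintype ι]

theorem Matrix.mulVec_add_dotProduct_add_add_mulVec_sub_dotProduct_sub {R : Type*} [CommRing R]
    (M : Matrix ι ι R) (x y : ι → R) :
    M *ᵥ (x + y) ⬝ᵥ (x + y) + M *ᵥ (x - y) ⬝ᵥ (x - y) = 2 * (M *ᵥ x ⬝ᵥ x + M *ᵥ y ⬝ᵥ y) := by
  simp only [mulVec_add, mulVec_sub, add_dotProduct, sub_dotProduct, dotProduct_add,
    dotProduct_sub]
  ring

theorem Matrix.transpose_mul_mul_mulVec_dotProduct {R : Type*} [CommSemiring R]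
    (M Q : Matrix ι ι R) (v : ι → R) :
    (Qᵀ * M * Q) *ᵥ v ⬝ᵥ v = M *ᵥ (Q *ᵥ v) ⬝ᵥ Q *ᵥ v := by
  rw [← mulVec_mulVec, ← mulVec_mulVec, mulVec_transpose, ← dotProduct_mulVec]

theorem Matrix.diagonal_mulVec_dotProduct [DecidableEq ι] {R : Type*} [CommSemiring R]
    (d v : ι → R) :
    diagonal d *ᵥ v ⬝ᵥ v = ∑ i, d i * v i ^ 2 := by
  simp [mulVec_diagonal, dotProduct, sq, mul_assoc]

theorem Matrix.transpose_mul_inv_mul_of_mem_orthogonalGroup [DecidableEq ι] {Q : Matrix ι ι ℝ}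
    (hQ : Q ∈ orthogonalGroup ι ℝ) (M : Matrix ι ι ℝ) : Qᵀ * M⁻¹ * Q = (Qᵀ * M * Q)⁻¹ := by
  rw [mul_inv_rev, mul_inv_rev, inv_eq_left_inv ((mem_orthogonalGroup_iff' ι ℝ).mp hQ),
    inv_eq_left_inv ((mem_orthogonalGroup_iff ι ℝ).mp hQ), Matrix.mul_assoc]

theorem Matrix.measurePreserving_mulVec_of_mem_orthogonalGroup [DecidableEq ι]
    {Q : Matrix ι ι ℝ} (hQ : Q ∈ orthogonalGroup ι ℝ) :
    MeasurePreserving (Q *ᵥ ·) volume volume := by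
  have hdet : |Q.det| = 1 := by
    have h := congrArg det ((mem_orthogonalGroup_iff' ι ℝ).mp hQ)
    rw [det_mul, det_transpose, det_one] at h
    exact (abs_eq zero_le_one).mpr (mul_self_eq_one_iff.mp h)
  have hmap : Measure.map (toLin' Q) volume = volume := by
    rw [Real.map_matrix_volume_pi_eq_smul_volume_pi (abs_pos.mp (hdet ▸ one_pos)), abs_inv, hdet,
      inv_one, ENNReal.ofReal_one, one_smul]
  refine ⟨?_, hmap⟩
  exact Continuous.measurable (by fun_prop)

theorem Matrix.integral_comp_mulVec_of_mem_orthogonalGroup [DecidableEq ι] {E : Type*}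
    [NormedAddCommGroup E] [NormedSpace ℝ E] {Q : Matrix ι ι ℝ} (hQ : Q ∈ orthogonalGroup ι ℝ)
    (f : (ι → ℝ) → E) : ∫ v, f (Q *ᵥ v) = ∫ y, f y :=
  let e := toLinearEquiv' Q (invertibleOfLeftInverse _ _ ((mem_orthogonalGroup_iff' ι ℝ).mp hQ))
  (measurePreserving_mulVec_of_mem_orthogonalGroup hQ).integral_comp'
    (f := e.toContinuousLinearEquiv.toHomeomorph.toMeasurableEquiv) f

theorem Matrix.IsHermitian.eigenvectorUnitary_transpose_mul_mul [DecidableEq ι]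
    {A : Matrix ι ι ℝ} (hA : A.IsHermitian) :
    (hA.eigenvectorUnitary : Matrix ι ι ℝ)ᵀ * A * hA.eigenvectorUnitary
      = diagonal hA.eigenvalues := by
  have := hA.conjStarAlgAut_star_eigenvectorUnitary
  rw [Unitary.conjStarAlgAut_star_apply] at this
  simpa [star_eq_conjTranspose] using this

theorem Matrix.IsHermitian.mulVec_eigenvectorUnitary_dotProduct [DecidableEq ι] {A : Matrix ι ι ℝ}
    (hA : A.IsHermitian) (v : ι → ℝ) :
    A *ᵥ ((hA.eigenvectorUnitary : Matrix ι ι ℝ) *ᵥ v)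
        ⬝ᵥ (hA.eigenvectorUnitary : Matrix ι ι ℝ) *ᵥ v = ∑ i, hA.eigenvalues i * v i ^ 2 := by
  rw [← transpose_mul_mul_mulVec_dotProduct, hA.eigenvectorUnitary_transpose_mul_mul,
    diagonal_mulVec_dotProduct]

theorem Matrix.IsHermitian.inv_mulVec_dotProduct [DecidableEq ι] {A : Matrix ι ι ℝ}
    (hA : A.IsHermitian) (hA0 : A.det ≠ 0) (q : ι → ℝ) :
    A⁻¹ *ᵥ q ⬝ᵥ q
      = ∑ i, (hA.eigenvalues i)⁻¹ * ((hA.eigenvectorUnitary : Matrix ι ι ℝ)ᵀ *ᵥ q) i ^ 2 := by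
  set Q : Matrix ι ι ℝ := ↑hA.eigenvectorUnitary
  have hQ : Q ∈ orthogonalGroup ι ℝ := hA.eigenvectorUnitary.2
  have hd : ∀ i, hA.eigenvalues i ≠ 0 := by
    rw [hA.det_eq_prod_eigenvalues] at hA0
    exact fun i => by simpa using Finset.prod_ne_zero_iff.mp hA0 i (Finset.mem_univ i)
  have hdiag_inv : (diagonal hA.eigenvalues)⁻¹ = diagonal (hA.eigenvalues)⁻¹ :=
    inv_eq_left_inv (by simp [diagonal_mul_diagonal, hd])
  conv_lhs => rw [← one_mulVec q, ← (mem_orthogonalGroup_iff ι ℝ).mp hQ, ← mulVec_mulVec]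
  rw [← transpose_mul_mul_mulVec_dotProduct, transpose_mul_inv_mul_of_mem_orthogonalGroup hQ,
    hA.eigenvectorUnitary_transpose_mul_mul, hdiag_inv, diagonal_mulVec_dotProduct]
  rfl

open Complex in
theorem Matrix.PosDef.integral_cexp_neg_mulVec_dotProduct_add [DecidableEq ι] {A : Matrix ι ι ℝ}
    (hA : A.PosDef) (q : ι → ℝ) :
    ∫ y : ι → ℝ, cexp (-((A *ᵥ y ⬝ᵥ y : ℝ) : ℂ) + I * ((q ⬝ᵥ y : ℝ) : ℂ))
      = (√(Real.pi ^ Fintype.card ι / A.det) : ℂ) * cexp (-((A⁻¹ *ᵥ q ⬝ᵥ q : ℝ) : ℂ) / 4) := by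
  set hH := hA.isHermitian
  set Q : Matrix ι ι ℝ := ↑hH.eigenvectorUnitary
  set d := hH.eigenvalues
  have hd : ∀ i, 0 < d i := hA.eigenvalues_pos
  have hexp : ∀ v : ι → ℝ, -((A *ᵥ (Q *ᵥ v) ⬝ᵥ Q *ᵥ v : ℝ) : ℂ) + I * ((q ⬝ᵥ Q *ᵥ v : ℝ) : ℂ)
      = -∑ i, (d i : ℂ) * (v i : ℂ) ^ 2 + ∑ i, I * ((Qᵀ *ᵥ q) i : ℂ) * v i := by
    intro v
    rw [hH.mulVec_eigenvectorUnitary_dotProduct, dotProduct_mulVec, ← mulVec_transpose]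
    push_cast
    simp [Finset.mul_sum, dotProduct, mul_assoc, d]
  rw [← integral_comp_mulVec_of_mem_orthogonalGroup (Q := Q) hH.eigenvectorUnitary.2]
  simp_rw [hexp]
  rw [GaussianFourier.integral_cexp_neg_sum_mul_add (b := fun i => (d i : ℂ))
      (fun i => by exact_mod_cast hd i), Finset.prod_mul_distrib, ← Complex.exp_sum]
  congr 1
  · have hfactor : ∀ i, ((Real.pi : ℂ) / (d i : ℂ)) ^ (1 / 2 : ℂ) = (√(Real.pi / d i) : ℂ) := by
      intro i
      rw [Real.sqrt_eq_rpow, ofReal_cpow (div_pos Real.pi_pos (hd i)).le]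
      push_cast
      rfl
    simp_rw [hfactor]
    rw [← ofReal_prod, ← Real.sqrt_prod _ (fun i _ => (div_pos Real.pi_pos (hd i)).le),
      Finset.prod_div_distrib, Finset.prod_const, Finset.card_univ, hH.det_eq_prod_eigenvalues]
    rfl
  · rw [hH.inv_mulVec_dotProduct hA.det_pos.ne']
    push_cast
    congr 1
    rw [neg_div, Finset.sum_div, ← Finset.sum_neg_distrib]
    refine Finset.sum_congr rfl fun i _ => ?_
    have := (hd i).ne'
    rw [mul_pow, I_sq]
    field_simp
    rfl

end

theorem Matrix.fromBlocks_zero_zero_mulVec_sumElim_dotProduct {m n R : Type*} [Fintype m]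
    [Fintype n] [NonUnitalNonAssocSemiring R] (A : Matrix m m R) (B : Matrix n n R) (x : m → R)
    (p : n → R) :
    fromBlocks A 0 0 B *ᵥ Sum.elim x p ⬝ᵥ Sum.elim x p = A *ᵥ x ⬝ᵥ x + B *ᵥ p ⬝ᵥ p := by
  simp [fromBlocks_mulVec, sumElim_dotProduct_sumElim]

theorem gauss_eq_ofReal (hbar : ℝ) (n : ℕ) (X : Matrix (Fin n) (Fin n) ℝ) (x : Fin n → ℝ) :
    gauss hbar n X x = ((((Real.pi * hbar) ^ (-(n : ℝ) / 4) * X.det ^ ((1 : ℝ) / 4)) *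
      Real.exp (-(X *ᵥ x ⬝ᵥ x) / (2 * hbar)) : ℝ) : ℂ) := by
  simp [gauss]

open Complex in
theorem gauss_wigner_integrand (hbar : ℝ) (n : ℕ) (X : Matrix (Fin n) (Fin n) ℝ)
    (x p y : Fin n → ℝ) :
    cexp (-(I * ((p ⬝ᵥ y : ℝ) : ℂ)) / (hbar : ℂ)) * gauss hbar n X (x + (2 : ℝ)⁻¹ • y) *
        (starRingEnd ℂ) (gauss hbar n X (x - (2 : ℝ)⁻¹ • y))
      = ((((Real.pi * hbar) ^ (-(n : ℝ) / 4) * X.det ^ ((1 : ℝ) / 4)) ^ 2 *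
          Real.exp (-(X *ᵥ x ⬝ᵥ x) / hbar) : ℝ) : ℂ) *
        cexp (-(((4 * hbar)⁻¹ • X) *ᵥ y ⬝ᵥ y : ℝ) + I * ((-hbar⁻¹ • p) ⬝ᵥ y : ℝ)) := by
  have hquad := X.mulVec_add_dotProduct_add_add_mulVec_sub_dotProduct_sub x ((2 : ℝ)⁻¹ • y)
  replace hquad := congrArg (fun r : ℝ => (r : ℂ)) hquad
  simp only [mulVec_smul, smul_dotProduct, dotProduct_smul, smul_eq_mul] at hquad
  push_cast at hquad
  have hcombine : ∀ k a b c e f : ℂ, a + b + c = e + f →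
      cexp a * (k * cexp b) * (k * cexp c) = k ^ 2 * cexp e * cexp f := by
    intro k a b c e f h
    rw [mul_assoc _ (cexp e), ← exp_add, ← h, exp_add, exp_add]
    ring
  rw [gauss_eq_ofReal, gauss_eq_ofReal, conj_ofReal]
  push_cast
  refine hcombine _ _ _ _ _ _ ?_
  simp only [smul_mulVec, smul_dotProduct, smul_eq_mul]
  push_cast
  linear_combination (-(2 * (hbar : ℂ))⁻¹) * hquad

theorem gauss_normalization_sq {a D : ℝ} (ha : 0 < a) (hD : 0 ≤ D) (n : ℕ) :
    (a ^ (-(n : ℝ) / 4) * D ^ ((1 : ℝ) / 4)) ^ 2 = √(D / a ^ n) := by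
  rw [Real.sqrt_eq_rpow, Real.div_rpow hD (by positivity), ← Real.rpow_natCast a n,
    ← Real.rpow_mul ha.le, mul_pow, ← Real.rpow_natCast, ← Real.rpow_natCast (D ^ _),
    ← Real.rpow_mul ha.le, ← Real.rpow_mul hD, div_eq_mul_inv (D ^ _), ← Real.rpow_neg ha.le,
    mul_comm]
  ring_nf

theorem wigner_gauss_constant {hbar D : ℝ} (hhbar : 0 < hbar) (hD : 0 < D) (n : ℕ) :
    (2 * Real.pi * hbar)⁻¹ ^ n * (((Real.pi * hbar) ^ (-(n : ℝ) / 4) * D ^ ((1 : ℝ) / 4)) ^ 2 *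
      √(Real.pi ^ n / ((4 * hbar)⁻¹ ^ n * D))) = (Real.pi * hbar)⁻¹ ^ n := by
  have hpi := Real.pi_pos
  rw [gauss_normalization_sq (by positivity) hD.le, ← Real.sqrt_mul (by positivity)]
  have hsq : D / (Real.pi * hbar) ^ n * (Real.pi ^ n / ((4 * hbar)⁻¹ ^ n * D))
      = ((2 : ℝ) ^ n) ^ 2 := by
    rw [inv_pow, mul_pow, mul_pow]
    field_simp
    rw [← pow_mul, mul_comm, pow_mul]
    norm_num
  rw [hsq, Real.sqrt_sq (by positivity), ← mul_pow]
  congr 1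
  field_simp

theorem wigner_gauss_eq {hbar : ℝ} (hhbar : 0 < hbar) {n : ℕ} {X : Matrix (Fin n) (Fin n) ℝ}
    (hX : X.PosDef) (x p : Fin n → ℝ) :
    wigner hbar n (gauss hbar n X) x p =
      (((Real.pi * hbar)⁻¹ ^ n : ℝ) : ℂ) *
        Complex.exp (-((X *ᵥ x ⬝ᵥ x + X⁻¹ *ᵥ p ⬝ᵥ p : ℝ) : ℂ) / (hbar : ℂ)) := by
  have hscaled : ((4 * hbar)⁻¹ • X).PosDef := hX.smul (by positivity)
  have hscaled_inv : ((4 * hbar)⁻¹ • X)⁻¹ = (4 * hbar) • X⁻¹ := by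
    refine inv_eq_left_inv ?_
    rw [smul_mul_smul_comm, mul_inv_cancel₀ (by positivity), one_smul,
      nonsing_inv_mul _ (isUnit_iff_ne_zero.mpr hX.det_pos.ne')]
  have hexponent : -((((4 * hbar) • X⁻¹) *ᵥ (-hbar⁻¹ • p) ⬝ᵥ (-hbar⁻¹ • p) : ℝ) : ℂ) / 4
      = -((X⁻¹ *ᵥ p ⬝ᵥ p : ℝ) : ℂ) / hbar := by
    simp only [smul_mulVec, mulVec_smul, smul_dotProduct, dotProduct_smul, smul_eq_mul]
    push_cast
    field_simp
  simp_rw [wigner, gauss_wigner_integrand]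
  rw [integral_const_mul, hscaled.integral_cexp_neg_mulVec_dotProduct_add, det_smul,
    Fintype.card_fin, hscaled_inv, hexponent, ← wigner_gauss_constant hhbar hX.det_pos n]
  push_cast
  rw [neg_add, add_div, Complex.exp_add]
  ring

theorem wigner_gauss_general (hbar : ℝ) (hhbar : 0 < hbar) (n : ℕ)
    (X : Matrix (Fin n) (Fin n) ℝ) (hX : X.PosDef) (x p : Fin n → ℝ) :
    wigner hbar n (gauss hbar n X) x p =
      (((Real.pi * hbar)⁻¹ ^ n : ℝ) : ℂ) *
        Complex.exp (-((X.mulVec x ⬝ᵥ x + X⁻¹.mulVec p ⬝ᵥ p : ℝ) : ℂ) / (hbar : ℂ)) ∧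
    wigner hbar n (gauss hbar n X) x p =
      (((Real.pi * hbar)⁻¹ ^ n : ℝ) : ℂ) *
        Complex.exp (-(((Matrix.fromBlocks X 0 0 X⁻¹).mulVec (Sum.elim x p) ⬝ᵥ
          Sum.elim x p : ℝ) : ℂ) / (hbar : ℂ)) := by
  refine ⟨wigner_gauss_eq hhbar hX x p, ?_⟩
  rw [wigner_gauss_eq hhbar hX x p, fromBlocks_zero_zero_mulVec_sumElim_dotProduct]

/-- The Wigner transform of the Gaussian `ψ_X` is
`(πħ)⁻ⁿ e^{-(X x·x + X⁻¹ p·p)/ħ}`, i.e. `(πħ)⁻ⁿ e^{-G z·z/ħ}` with `G = [[X,0],[0,X⁻¹]]`. -/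
theorem wigner_gauss (hbar : ℝ) (hhbar : 0 < hbar) (n : ℕ)
    (X : Matrix (Fin n) (Fin n) ℝ) (hXs : X.IsSymm) (hX : X.PosDef) (x p : Fin n → ℝ) :
    wigner hbar n (gauss hbar n X) x p =
      (((Real.pi * hbar)⁻¹ ^ n : ℝ) : ℂ) *
        Complex.exp (-((X.mulVec x ⬝ᵥ x + X⁻¹.mulVec p ⬝ᵥ p : ℝ) : ℂ) / (hbar : ℂ)) ∧
    wigner hbar n (gauss hbar n X) x p =
      (((Real.pi * hbar)⁻¹ ^ n : ℝ) : ℂ) *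
        Complex.exp (-(((Matrix.fromBlocks X 0 0 X⁻¹).mulVec (Sum.elim x p) ⬝ᵥ
          Sum.elim x p : ℝ) : ℂ) / (hbar : ℂ)) :=
  wigner_gauss_general hbar hhbar n X hX x p

end
end

section
/- Let a be a Schwartz function on ℝ²ⁿ and let ψ, φ be Schwartz functions on ℝⁿ. Then ∫_{ℝⁿ} (Â_a ψ)(x) conj(φ(x)) dx = ∫_{ℝ²ⁿ} a(z) W(ψ, φ)(z) dz. -/
open MeasureTheory Matrix

noncomputable section

/-!
Both sides are the same absolutely convergent triple integral. Expanding the Weyl kernel, the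
left side is `∫∫∫ e^{i p·(x-y)/ħ} a((x+y)/2, p) ψ(y) conj(φ(x)) dp dy dx`; in the coordinates
`x = u - v/2`, `y = u + v/2` the inner `v`-integral is exactly the cross-Wigner transform at
`(u, p)`. This change of variables is a composite of two shears, hence preserves Lebesgue
measure, and Fubini applies because `|a(x, p)| ≤ C (1 + |p|)^{-(n+1)}` uniformly in `x` while
`ψ` and `φ` are integrable.
-/

section MidpointShear

variable {E F : Type*} [AddCommGroup E] [Module ℝ E] [MeasurableSpace E] [MeasurableAdd₂ E]
  [MeasurableSub₂ E] [MeasurableConstSMul ℝ E] [MeasurableSpace F]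

def midpointShear : (E × E) ≃ᵐ (E × E) where
  toFun w := (w.1 - (2 : ℝ)⁻¹ • w.2, w.1 + (2 : ℝ)⁻¹ • w.2)
  invFun w := ((2 : ℝ)⁻¹ • (w.1 + w.2), w.2 - w.1)
  left_inv w := by ext <;> module
  right_inv w := by ext <;> module
  measurable_toFun := by simp only [Equiv.coe_fn_mk]; fun_prop
  measurable_invFun := by simp only [Equiv.coe_fn_symm_mk]; fun_prop

@[simp]
theorem midpointShear_apply (w : E × E) :
    midpointShear w = (w.1 - (2 : ℝ)⁻¹ • w.2, w.1 + (2 : ℝ)⁻¹ • w.2) := rfl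

/-- `((u, p), v) ↦ ((u - v/2, u + v/2), p)`. -/
def midpointShearProd : ((E × F) × E) ≃ᵐ ((E × E) × F) :=
  (MeasurableEquiv.prodAssoc.trans
    ((MeasurableEquiv.refl E).prodCongr MeasurableEquiv.prodComm)).trans
    (MeasurableEquiv.prodAssoc.symm.trans (midpointShear.prodCongr (MeasurableEquiv.refl F)))

variable (μ : Measure E) [SFinite μ] [μ.IsAddLeftInvariant]

theorem measurePreserving_midpointShear :
    MeasurePreserving (midpointShear (E := E)) (μ.prod μ) (μ.prod μ) := by
  have hshift : MeasurePreserving (fun w : E × E => (w.2, w.1 - (2 : ℝ)⁻¹ • w.2))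
      (μ.prod μ) (μ.prod μ) :=
    (MeasurePreserving.skew_product (MeasurePreserving.id μ) (by fun_prop)
      (ae_of_all _ fun v => (measurePreserving_sub_right μ ((2 : ℝ)⁻¹ • v)).map_eq)).comp
      Measure.measurePreserving_swap
  convert (measurePreserving_prod_add μ μ).comp (Measure.measurePreserving_swap.comp hshift)
    using 1
  ext w <;> simp only [midpointShear_apply, Function.comp_apply, Prod.fst_swap, Prod.snd_swap]
  module

theorem measurePreserving_midpointShearProd (ν : Measure F) [SFinite ν] :
    MeasurePreserving (midpointShearProd (E := E) (F := F)) ((μ.prod ν).prod μ)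
      ((μ.prod μ).prod ν) :=
  (((measurePreserving_midpointShear μ).prod (MeasurePreserving.id ν)).comp
    (measurePreserving_prodAssoc μ μ ν).symm).comp
    (((MeasurePreserving.id μ).prod Measure.measurePreserving_swap).comp
      (measurePreserving_prodAssoc μ ν μ))

end MidpointShear

theorem SchwartzMap.exists_norm_le_mul_one_add_norm_rpow_neg {E F : Type*}
    [NormedAddCommGroup E] [NormedSpace ℝ E] [NormedAddCommGroup F] [NormedSpace ℝ F]
    (f : SchwartzMap E F) (k : ℕ) :
    ∃ C, 0 ≤ C ∧ ∀ x, ‖f x‖ ≤ C * (1 + ‖x‖) ^ (-(k : ℝ)) := by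
  refine ⟨2 ^ k * (Finset.Iic (k, 0)).sup (fun m => SchwartzMap.seminorm ℝ m.1 m.2) f,
    by positivity, fun x => ?_⟩
  have hdecay := SchwartzMap.one_add_le_sup_seminorm_apply (𝕜 := ℝ) (m := (k, 0)) le_rfl le_rfl f x
  rw [norm_iteratedFDeriv_zero] at hdecay
  rw [Real.rpow_neg (by positivity), Real.rpow_natCast, ← div_eq_mul_inv,
    le_div_iff₀ (by positivity), mul_comm]
  exact hdecay

theorem norm_le_norm_sumElim_right {ι κ E : Type*} [Fintype ι] [Fintype κ]
    [SeminormedAddCommGroup E] (u : ι → E) (p : κ → E) : ‖p‖ ≤ ‖Sum.elim u p‖ :=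
  (pi_norm_le_iff_of_nonneg (norm_nonneg _)).2 fun i => norm_le_pi_norm (Sum.elim u p) (Sum.inr i)

section WeylPairing

variable (hbar : ℝ) (n : ℕ)

def weylPairingIntegrand (a : ((Fin n ⊕ Fin n) → ℝ) → ℂ)
    (ψ φ : (Fin n → ℝ) → ℂ) (x y p : Fin n → ℝ) : ℂ :=
  (((2 * Real.pi * hbar)⁻¹ ^ n : ℝ) : ℂ) *
    (Complex.exp (Complex.I * ((p ⬝ᵥ (x - y) : ℝ) : ℂ) / (hbar : ℂ)) *
      a (Sum.elim ((2 : ℝ)⁻¹ • (x + y)) p)) * ψ y * starRingEnd ℂ (φ x)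

theorem weyl_mul_conj_eq_integral (a : ((Fin n ⊕ Fin n) → ℝ) → ℂ) (ψ φ : (Fin n → ℝ) → ℂ)
    (x : Fin n → ℝ) :
    weyl hbar n a ψ x * starRingEnd ℂ (φ x) =
      ∫ y, ∫ p, weylPairingIntegrand hbar n a ψ φ x y p := by
  rw [weyl, ← integral_mul_const]
  congr 1 with y
  simp only [weylKernel, weylPairingIntegrand, integral_mul_const, integral_const_mul]

theorem mul_crossWigner_eq_integral (a : ((Fin n ⊕ Fin n) → ℝ) → ℂ) (ψ φ : (Fin n → ℝ) → ℂ)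
    (u p : Fin n → ℝ) :
    a (Sum.elim u p) * crossWigner hbar n ψ φ u p =
      ∫ v, weylPairingIntegrand hbar n a ψ φ (u - (2 : ℝ)⁻¹ • v) (u + (2 : ℝ)⁻¹ • v) p := by
  simp only [crossWigner, ← integral_const_mul]
  congr 1 with v
  have hdiff : u - (2 : ℝ)⁻¹ • v - (u + (2 : ℝ)⁻¹ • v) = -v := by module
  have hmid : (2 : ℝ)⁻¹ • (u - (2 : ℝ)⁻¹ • v + (u + (2 : ℝ)⁻¹ • v)) = u := by module
  rw [weylPairingIntegrand, hdiff, hmid, dotProduct_neg, Complex.ofReal_neg, mul_neg]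
  ring

theorem continuous_weylPairingIntegrand {a : ((Fin n ⊕ Fin n) → ℝ) → ℂ} {ψ φ : (Fin n → ℝ) → ℂ}
    (ha : Continuous a) (hψ : Continuous ψ) (hφ : Continuous φ) :
    Continuous fun q : ((Fin n → ℝ) × (Fin n → ℝ)) × (Fin n → ℝ) =>
      weylPairingIntegrand hbar n a ψ φ q.1.1 q.1.2 q.2 := by
  have hsymbol : Continuous fun q : ((Fin n → ℝ) × (Fin n → ℝ)) × (Fin n → ℝ) =>
      a (Sum.elim ((2 : ℝ)⁻¹ • (q.1.1 + q.1.2)) q.2) :=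
    ha.comp ((Homeomorph.sumPiEquivProdPi (Fin n) (Fin n) fun _ => ℝ).symm.continuous.comp
      (by fun_prop : Continuous fun q : ((Fin n → ℝ) × (Fin n → ℝ)) × (Fin n → ℝ) =>
        ((2 : ℝ)⁻¹ • (q.1.1 + q.1.2), q.2)))
  unfold weylPairingIntegrand
  refine ((continuous_const.mul (Continuous.mul ?_ hsymbol)).mul ?_).mul ?_ <;> fun_prop

theorem integrable_weylPairingIntegrand (a : SchwartzMap ((Fin n ⊕ Fin n) → ℝ) ℂ)
    (ψ φ : SchwartzMap (Fin n → ℝ) ℂ) :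
    Integrable (fun q : ((Fin n → ℝ) × (Fin n → ℝ)) × (Fin n → ℝ) =>
      weylPairingIntegrand hbar n a ψ φ q.1.1 q.1.2 q.2) := by
  obtain ⟨C, hC0, hC⟩ := a.exists_norm_le_mul_one_add_norm_rpow_neg (n + 1)
  set c : ℝ := ‖(((2 * Real.pi * hbar)⁻¹ ^ n : ℝ) : ℂ)‖
  have hweight : Integrable (fun p : Fin n → ℝ => (1 + ‖p‖) ^ (-((n + 1 : ℕ) : ℝ))) :=
    integrable_one_add_norm (by simp)
  have hbound : Integrable fun q : ((Fin n → ℝ) × (Fin n → ℝ)) × (Fin n → ℝ) =>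
      (‖φ q.1.1‖ * ‖ψ q.1.2‖) * (c * C * (1 + ‖q.2‖) ^ (-((n + 1 : ℕ) : ℝ))) :=
    (φ.integrable.norm.mul_prod ψ.integrable.norm).mul_prod (hweight.const_mul _)
  refine hbound.mono' (continuous_weylPairingIntegrand hbar n a.continuous ψ.continuous
    φ.continuous).aestronglyMeasurable (ae_of_all _ fun q => ?_)
  have hsymbol : ‖a (Sum.elim ((2 : ℝ)⁻¹ • (q.1.1 + q.1.2)) q.2)‖ ≤
      C * (1 + ‖q.2‖) ^ (-((n + 1 : ℕ) : ℝ)) := by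
    refine (hC _).trans (mul_le_mul_of_nonneg_left ?_ hC0)
    exact Real.rpow_le_rpow_of_nonpos (by positivity)
      (by gcongr; exact norm_le_norm_sumElim_right _ _) (neg_nonpos.2 (Nat.cast_nonneg _))
  have hphase (r : ℝ) : ‖Complex.exp (Complex.I * (r : ℂ) / (hbar : ℂ))‖ = 1 := by
    rw [mul_div_assoc, ← Complex.ofReal_div, Complex.norm_exp_I_mul_ofReal]
  simp only [weylPairingIntegrand, norm_mul, hphase, one_mul, RCLike.norm_conj]
  calc c * ‖a (Sum.elim ((2 : ℝ)⁻¹ • (q.1.1 + q.1.2)) q.2)‖ * ‖ψ q.1.2‖ * ‖φ q.1.1‖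
      ≤ c * (C * (1 + ‖q.2‖) ^ (-((n + 1 : ℕ) : ℝ))) * ‖ψ q.1.2‖ * ‖φ q.1.1‖ := by gcongr
    _ = _ := by ring

end WeylPairing

theorem weyl_pairing_crossWigner_general (hbar : ℝ) (n : ℕ)
    (a : SchwartzMap ((Fin n ⊕ Fin n) → ℝ) ℂ) (ψ φ : SchwartzMap (Fin n → ℝ) ℂ) :
    ∫ x : Fin n → ℝ, weyl hbar n (⇑a) (⇑ψ) x * (starRingEnd ℂ) (φ x) =
      ∫ z : (Fin n ⊕ Fin n) → ℝ, a z * crossWignerZ hbar n (⇑ψ) (⇑φ) z := by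
  set F := fun q : ((Fin n → ℝ) × (Fin n → ℝ)) × (Fin n → ℝ) =>
    weylPairingIntegrand hbar n a ψ φ q.1.1 q.1.2 q.2
  have hF : Integrable F := integrable_weylPairingIntegrand hbar n a ψ φ
  have hshear := measurePreserving_midpointShearProd (volume : Measure (Fin n → ℝ))
    (volume : Measure (Fin n → ℝ))
  have hFshear : Integrable (F ∘ midpointShearProd) :=
    (hshear.integrable_comp_emb midpointShearProd.measurableEmbedding).2 hF
  calc ∫ x, weyl hbar n a ψ x * starRingEnd ℂ (φ x)
      = ∫ x, ∫ y, ∫ p, F ((x, y), p) := by simp_rw [weyl_mul_conj_eq_integral]; rfl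
    _ = ∫ q, F q := ((integral_prod _ hF).trans (integral_prod _ hF.integral_prod_left)).symm
    _ = ∫ q, F (midpointShearProd q) := (hshear.integral_comp' F).symm
    _ = ∫ w : (Fin n → ℝ) × (Fin n → ℝ), ∫ v, F (midpointShearProd (w, v)) :=
        integral_prod _ hFshear
    _ = ∫ w : (Fin n → ℝ) × (Fin n → ℝ),
          a (Sum.elim w.1 w.2) * crossWigner hbar n ψ φ w.1 w.2 := by
        simp_rw [mul_crossWigner_eq_integral]; rfl
    _ = ∫ z, a z * crossWignerZ hbar n ψ φ z :=
        (volume_measurePreserving_sumPiEquivProdPi_symm fun _ => ℝ).integral_comp'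
          fun z => a z * crossWignerZ hbar n ψ φ z

/-- `⟨Â_a ψ, conj φ⟩ = ⟨⟨a, W(ψ,φ)⟩⟩`: the Weyl operator pairs with the
cross-Wigner transform. -/
theorem weyl_pairing_crossWigner (hbar : ℝ) (hhbar : 0 < hbar) (n : ℕ)
    (a : SchwartzMap ((Fin n ⊕ Fin n) → ℝ) ℂ) (ψ φ : SchwartzMap (Fin n → ℝ) ℂ) :
    ∫ x : Fin n → ℝ, weyl hbar n (⇑a) (⇑ψ) x * (starRingEnd ℂ) (φ x) =
      ∫ z : (Fin n ⊕ Fin n) → ℝ, a z * crossWignerZ hbar n (⇑ψ) (⇑φ) z :=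
  weyl_pairing_crossWigner_general hbar n a ψ φ

end
end

section
/- Let a and b be Schwartz functions on ℝ²ⁿ. If Â_a ψ = Â_b ψ for every Schwartz function ψ on ℝⁿ, then a = b. (The Weyl correspondence is one-to-one on Schwartz symbols.) -/
open MeasureTheory Matrix

noncomputable section

/-!
Since `a ↦ Â_a` is linear, it suffices to show that `Â_c = 0` forces `c = 0`. For fixed `x` the
kernel `K_c(x, ·)` is continuous and bounded, so pairing it with all Schwartz functions (in
particular all smooth compactly supported ones) gives `K_c = 0`. In the coordinates
`x = q + u/2`, `y = q - u/2` the kernel is, up to the factor `(2πħ)⁻ⁿ`, the Fourier transform of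
`p ↦ c(q, p)` evaluated at `-u/(2πħ)`; Fourier inversion then gives `c = 0`.
-/

open SchwartzMap FourierTransform

theorem SchwartzMap.exists_integrable_bound_of_norm_le
    {V E F : Type*} [NormedAddCommGroup V] [NormedSpace ℝ V] [FiniteDimensional ℝ V]
    [MeasurableSpace V] [BorelSpace V] (μ : Measure V) [μ.IsAddHaarMeasure]
    [NormedAddCommGroup E] [NormedSpace ℝ E] [NormedAddCommGroup F] [NormedSpace ℝ F]
    (f : 𝓢(E, F)) :
    ∃ g : V → ℝ, Integrable g μ ∧ ∀ x v, ‖v‖ ≤ ‖x‖ → ‖f x‖ ≤ g v := by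
  set k := Module.finrank ℝ V + 1
  set C := 2 ^ k * (Finset.Iic (k, 0)).sup (fun m => SchwartzMap.seminorm ℝ m.1 m.2) f
  refine ⟨fun v => C * (1 + ‖v‖) ^ (-(k : ℝ)),
    (integrable_one_add_norm (by simp [k])).const_mul C, fun x v hvx => ?_⟩
  have hdecay := one_add_le_sup_seminorm_apply (𝕜 := ℝ) (m := (k, 0)) le_rfl le_rfl f x
  rw [norm_iteratedFDeriv_zero] at hdecay
  change ‖f x‖ ≤ C * (1 + ‖v‖) ^ (-(k : ℝ))
  rw [Real.rpow_neg (by positivity), Real.rpow_natCast, ← div_eq_mul_inv,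
    le_div_iff₀ (by positivity)]
  calc ‖f x‖ * (1 + ‖v‖) ^ k ≤ (1 + ‖x‖) ^ k * ‖f x‖ := by rw [mul_comm]; gcongr
  _ ≤ C := hdecay

theorem eq_zero_of_forall_integral_mul_schwartzMap_eq_zero
    {E : Type*} [NormedAddCommGroup E] [NormedSpace ℝ E] [FiniteDimensional ℝ E]
    [MeasurableSpace E] [BorelSpace E] {μ : Measure E} [μ.IsAddHaarMeasure] {k : E → ℂ}
    (hk : Continuous k) (h : ∀ ψ : 𝓢(E, ℂ), ∫ y, k y * ψ y ∂μ = 0) : k = 0 := by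
  refine (hk.ae_eq_iff_eq μ continuous_const).mp ?_
  refine ae_eq_zero_of_integral_contDiff_smul_eq_zero hk.locallyIntegrable fun g hg hsupp => ?_
  have hg' : HasCompactSupport (Complex.ofRealCLM ∘ g) := hsupp.comp_left rfl
  rw [← h (hg'.toSchwartzMap (by fun_prop))]
  simp [mul_comm]

theorem Continuous.eq_zero_of_fourier_eq_zero {V E : Type*} [NormedAddCommGroup V]
    [InnerProductSpace ℝ V] [FiniteDimensional ℝ V] [MeasurableSpace V] [BorelSpace V]
    [NormedAddCommGroup E] [NormedSpace ℂ E] [CompleteSpace E] {f : V → E}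
    (hc : Continuous f) (hf : Integrable f) (h : 𝓕 f = 0) : f = 0 := by
  rw [← hc.fourierInv_fourier_eq hf (h ▸ integrable_zero _ _ _), h]
  ext
  simp [Real.fourierInv_eq]

open scoped RealInnerProductSpace in
theorem eq_zero_of_forall_integral_exp_dotProduct_mul_eq_zero {ι : Type*} [Fintype ι]
    {f : (ι → ℝ) → ℂ} (hc : Continuous f) (hf : Integrable f) {ħ : ℝ} (hħ : ħ ≠ 0)
    (h : ∀ u : ι → ℝ, ∫ p, Complex.exp (Complex.I * ((p ⬝ᵥ u : ℝ) : ℂ) / (ħ : ℂ)) * f p = 0) :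
    f = 0 := by
  have hvol := EuclideanSpace.volume_preserving_symm_measurableEquiv_toLp ι
  set G : EuclideanSpace ℝ ι → ℂ := fun w => f (WithLp.ofLp w)
  have hG : G = 0 := by
    refine Continuous.eq_zero_of_fourier_eq_zero (hc.comp (PiLp.continuous_ofLp 2 _))
      ((hvol.integrable_comp_emb (MeasurableEquiv.measurableEmbedding _)).mpr hf) ?_
    ext w
    rw [Real.fourier_eq', Pi.zero_apply, ← h (-(2 * Real.pi * ħ) • WithLp.ofLp w),
      ← hvol.integral_comp']
    refine integral_congr_ae (ae_of_all _ fun v => ?_)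
    have hinner : ⟪v, w⟫ = WithLp.ofLp v ⬝ᵥ WithLp.ofLp w := by
      simp [EuclideanSpace.inner_eq_star_dotProduct, dotProduct_comm]
    have hħ' : (ħ : ℂ) ≠ 0 := by exact_mod_cast hħ
    simp only [MeasurableEquiv.coe_toLp_symm, smul_eq_mul, dotProduct_smul, hinner]
    congr 2
    push_cast
    field_simp
  funext p
  simpa [G] using congrFun hG (WithLp.toLp 2 p)

@[fun_prop]
theorem Continuous.sumElim_pi {X ι κ Y : Type*} [TopologicalSpace X] [TopologicalSpace Y]
    {f : X → ι → Y} {g : X → κ → Y} (hf : Continuous f) (hg : Continuous g) :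
    Continuous fun x => Sum.elim (f x) (g x) :=
  Homeomorph.sumArrowHomeomorphProdArrow.symm.continuous.comp (hf.prodMk hg)

theorem SchwartzMap.exists_integrable_bound_sumElim {ι κ F : Type*} [Fintype ι] [Fintype κ]
    [NormedAddCommGroup F] [NormedSpace ℝ F] (a : 𝓢((ι ⊕ κ → ℝ), F)) :
    ∃ g : (κ → ℝ) → ℝ, Integrable g ∧ ∀ q p, ‖a (Sum.elim q p)‖ ≤ g p := by
  obtain ⟨g, hg, hbound⟩ := a.exists_integrable_bound_of_norm_le (volume : Measure (κ → ℝ))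
  refine ⟨g, hg, fun q p => hbound _ _ ?_⟩
  exact (pi_norm_le_iff_of_nonneg (norm_nonneg _)).mpr fun i =>
    norm_le_pi_norm (Sum.elim q p) (Sum.inr i)

theorem Complex.norm_exp_I_mul_ofReal_div_ofReal (r ħ : ℝ) :
    ‖Complex.exp (Complex.I * r / ħ)‖ = 1 := by
  simp [Complex.norm_exp]

theorem integrable_exp_dotProduct_mul_sumElim {ι κ : Type*} [Fintype ι] [Fintype κ] (ħ : ℝ)
    (a : 𝓢((ι ⊕ κ → ℝ), ℂ)) (q : ι → ℝ) (u : κ → ℝ) :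
    Integrable fun p : κ → ℝ =>
      Complex.exp (Complex.I * ((p ⬝ᵥ u : ℝ) : ℂ) / (ħ : ℂ)) * a (Sum.elim q p) := by
  obtain ⟨g, hg, hbound⟩ := a.exists_integrable_bound_sumElim
  refine hg.mono' (by fun_prop : Continuous _).aestronglyMeasurable (ae_of_all _ fun p => ?_)
  rw [norm_mul, Complex.norm_exp_I_mul_ofReal_div_ofReal, one_mul]
  exact hbound q p

section WeylKernel

variable {n : ℕ} (ħ : ℝ)

theorem weylKernel_sub (a b : 𝓢((Fin n ⊕ Fin n → ℝ), ℂ)) (x y : Fin n → ℝ) :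
    weylKernel ħ n ⇑(a - b) x y = weylKernel ħ n a x y - weylKernel ħ n b x y := by
  simp only [weylKernel, ← mul_sub]
  rw [← integral_sub (integrable_exp_dotProduct_mul_sumElim ħ a _ _)
    (integrable_exp_dotProduct_mul_sumElim ħ b _ _)]
  simp only [_root_.sub_apply, mul_sub]

theorem continuous_weylKernel (a : 𝓢((Fin n ⊕ Fin n → ℝ), ℂ)) (x : Fin n → ℝ) :
    Continuous (weylKernel ħ n a x) := by
  obtain ⟨g, hg, hbound⟩ := a.exists_integrable_bound_sumElim
  refine continuous_const.mul (continuous_of_dominated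
    (fun y => (integrable_exp_dotProduct_mul_sumElim ħ a _ _).aestronglyMeasurable)
    (fun y => ae_of_all _ fun p => ?_) hg (ae_of_all _ fun p => by fun_prop))
  rw [norm_mul, Complex.norm_exp_I_mul_ofReal_div_ofReal, one_mul]
  exact hbound _ p

theorem exists_norm_weylKernel_le (a : 𝓢((Fin n ⊕ Fin n → ℝ), ℂ)) (x : Fin n → ℝ) :
    ∃ M, ∀ y, ‖weylKernel ħ n a x y‖ ≤ M := by
  obtain ⟨g, hg, hbound⟩ := a.exists_integrable_bound_sumElim
  refine ⟨‖(((2 * Real.pi * ħ)⁻¹ ^ n : ℝ) : ℂ)‖ * ∫ p, g p, fun y => ?_⟩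
  rw [weylKernel, norm_mul]
  refine mul_le_mul_of_nonneg_left (norm_integral_le_of_norm_le hg (ae_of_all _ fun p => ?_))
    (norm_nonneg _)
  rw [norm_mul, Complex.norm_exp_I_mul_ofReal_div_ofReal, one_mul]
  exact hbound _ p

theorem integrable_weylKernel_mul (a : 𝓢((Fin n ⊕ Fin n → ℝ), ℂ)) (ψ : 𝓢((Fin n → ℝ), ℂ))
    (x : Fin n → ℝ) : Integrable fun y => weylKernel ħ n a x y * ψ y := by
  obtain ⟨M, hM⟩ := exists_norm_weylKernel_le ħ a x
  exact ψ.integrable.bdd_mul (continuous_weylKernel ħ a x).aestronglyMeasurable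
    (ae_of_all _ hM)

theorem weyl_sub (a b : 𝓢((Fin n ⊕ Fin n → ℝ), ℂ)) (ψ : 𝓢((Fin n → ℝ), ℂ)) (x : Fin n → ℝ) :
    weyl ħ n ⇑(a - b) ψ x = weyl ħ n a ψ x - weyl ħ n b ψ x := by
  simp only [weyl, weylKernel_sub, sub_mul, ← integral_sub
    (integrable_weylKernel_mul ħ a ψ x) (integrable_weylKernel_mul ħ b ψ x)]

theorem weylKernel_add_smul_sub_smul (a : (Fin n ⊕ Fin n → ℝ) → ℂ) (q u : Fin n → ℝ) :
    weylKernel ħ n a (q + (2 : ℝ)⁻¹ • u) (q - (2 : ℝ)⁻¹ • u) =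
      (((2 * Real.pi * ħ)⁻¹ ^ n : ℝ) : ℂ) *
        ∫ p, Complex.exp (Complex.I * ((p ⬝ᵥ u : ℝ) : ℂ) / (ħ : ℂ)) * a (Sum.elim q p) := by
  have hmid : (2 : ℝ)⁻¹ • ((q + (2 : ℝ)⁻¹ • u) + (q - (2 : ℝ)⁻¹ • u)) = q := by module
  have hdiff : (q + (2 : ℝ)⁻¹ • u) - (q - (2 : ℝ)⁻¹ • u) = u := by module
  rw [weylKernel, hmid, hdiff]

theorem weylKernel_eq_zero_of_weyl_eq_zero (a : 𝓢((Fin n ⊕ Fin n → ℝ), ℂ))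
    (h : ∀ (ψ : 𝓢((Fin n → ℝ), ℂ)) x, weyl ħ n a ψ x = 0) : weylKernel ħ n a = 0 := by
  funext x
  exact eq_zero_of_forall_integral_mul_schwartzMap_eq_zero (continuous_weylKernel ħ a x)
    fun ψ => h ψ x

theorem eq_zero_of_weylKernel_eq_zero (hħ : ħ ≠ 0) (a : 𝓢((Fin n ⊕ Fin n → ℝ), ℂ))
    (h : weylKernel ħ n a = 0) : a = 0 := by
  ext z
  have hconst : (((2 * Real.pi * ħ)⁻¹ ^ n : ℝ) : ℂ) ≠ 0 := by
    simp [hħ, Real.pi_pos.ne']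
  have hslice : (fun p => a (Sum.elim (z ∘ Sum.inl) p)) = 0 := by
    refine eq_zero_of_forall_integral_exp_dotProduct_mul_eq_zero (by fun_prop)
      (by simpa using integrable_exp_dotProduct_mul_sumElim ħ a (z ∘ Sum.inl) 0) hħ fun u => ?_
    have hu := congrFun (congrFun h (z ∘ Sum.inl + (2 : ℝ)⁻¹ • u)) (z ∘ Sum.inl - (2 : ℝ)⁻¹ • u)
    rw [weylKernel_add_smul_sub_smul] at hu
    exact (mul_eq_zero.mp hu).resolve_left hconst
  simpa using congrFun hslice (z ∘ Sum.inr)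

end WeylKernel

/-- The Weyl correspondence is one-to-one on Schwartz symbols. -/
theorem weyl_injective (hbar : ℝ) (hhbar : 0 < hbar) (n : ℕ)
    (a b : SchwartzMap ((Fin n ⊕ Fin n) → ℝ) ℂ)
    (h : ∀ ψ : SchwartzMap (Fin n → ℝ) ℂ, ∀ x : Fin n → ℝ,
      weyl hbar n (⇑a) (⇑ψ) x = weyl hbar n (⇑b) (⇑ψ) x) :
    a = b := by
  have hweyl : ∀ (ψ : 𝓢((Fin n → ℝ), ℂ)) x, weyl hbar n ⇑(a - b) ψ x = 0 := fun ψ x => by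
    rw [weyl_sub, h, sub_self]
  exact sub_eq_zero.mp (eq_zero_of_weylKernel_eq_zero hbar hhbar.ne' (a - b)
    (weylKernel_eq_zero_of_weyl_eq_zero hbar (a - b) hweyl))

end
end

section
/- Let G be a real symmetric positive definite 2n×2n matrix that is symplectic. Then the positive definite square root G^{1/2} of G is also symplectic (and symmetric positive definite). -/
open MeasureTheory Matrix

noncomputable section

open scoped ComplexOrder in
/-- The square root of a positive semidefinite matrix (removed from Mathlib; old definition). -/
noncomputable def Matrix.PosSemidef.sqrt {n 𝕜 : Type*} [Fintype n] [RCLike 𝕜] [DecidableEq n]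
    {A : Matrix n n 𝕜} (hA : A.PosSemidef) : Matrix n n 𝕜 :=
  hA.1.eigenvectorUnitary.1 * diagonal ((↑) ∘ (√·) ∘ hA.1.eigenvalues) *
    (star hA.1.eigenvectorUnitary : Matrix n n 𝕜)

/-! For symmetric `G`, the symplectic condition `G J G = J` says `Jᵀ G J = G⁻¹`, since `J` is
orthogonal. Both conjugation by an orthogonal matrix and inversion commute with the positive
square root, by uniqueness of positive square roots, so `Jᵀ G^{1/2} J = (G^{1/2})⁻¹`, which is
the symplectic condition for `G^{1/2}`. -/

open scoped ComplexOrder MatrixOrder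

theorem Matrix.PosSemidef.sqrt_eq_cfcSqrt {n 𝕜 : Type*} [Fintype n] [RCLike 𝕜] [DecidableEq n]
    {A : Matrix n n 𝕜} (hA : A.PosSemidef) : hA.sqrt = CFC.sqrt A := by
  rw [CFC.sqrt_eq_cfc, cfc_nnreal_eq_real _ A, hA.1.cfc_eq]
  simp [IsHermitian.cfc, Matrix.PosSemidef.sqrt, Function.comp_def, hA.eigenvalues_nonneg]

theorem mul_mul_eq_iff_star_mul_mul_eq_inverse {R : Type*} [Ring R] [StarRing R]
    (u : unitary R) {r : R} (hr : IsUnit r) :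
    r * u * r = u ↔ star (u : R) * r * u = Ring.inverse r := by
  constructor
  · intro h
    rw [← one_mul (Ring.inverse r), Ring.eq_mul_inverse_iff_mul_eq _ _ _ hr, mul_assoc _ (u : R) r,
      mul_assoc, ← mul_assoc r, h, Unitary.coe_star_mul_self]
  · intro h
    calc r * u * r = u * (star (u : R) * r * u) * r := by
          rw [← mul_assoc, ← mul_assoc, Unitary.mul_star_self_of_mem u.2, one_mul]
      _ = u := by rw [h, Ring.inverse_mul_cancel_right _ _ hr]

namespace CFC

variable {A : Type*} [PartialOrder A] [Ring A] [StarRing A] [TopologicalSpace A]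
  [StarOrderedRing A] [Algebra ℝ A] [ContinuousFunctionalCalculus ℝ A IsSelfAdjoint]
  [NonnegSpectrumClass ℝ A] [IsSemitopologicalRing A] [T2Space A]

theorem sqrt_unitary_conjugate (u : unitary A) {a : A} (ha : 0 ≤ a) :
    sqrt (star (u : A) * a * u) = star (u : A) * sqrt a * u := by
  refine sqrt_unique ?_ (star_left_conjugate_nonneg (sqrt_nonneg a) _)
  calc star (u : A) * sqrt a * u * (star (u : A) * sqrt a * u)
      = star (u : A) * (sqrt a * (u * star (u : A)) * sqrt a) * u := by noncomm_ring
    _ = star (u : A) * a * u := by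
      rw [Unitary.mul_star_self_of_mem u.2, mul_one, sqrt_mul_sqrt_self a]

theorem sqrt_mul_mul_sqrt_eq_of_mul_mul_eq (u : unitary A) {a : A} (ha : IsStrictlyPositive a)
    (h : a * u * a = u) : sqrt a * u * sqrt a = u := by
  rw [mul_mul_eq_iff_star_mul_mul_eq_inverse u ha.isUnit] at h
  rw [mul_mul_eq_iff_star_mul_mul_eq_inverse u ha.sqrt.isUnit, ← sqrt_unitary_conjugate u ha.nonneg,
    h, sqrt_ringInverse]

end CFC

theorem stdJ_mem_unitary (n : ℕ) :
    stdJ n ∈ unitary (Matrix (Fin n ⊕ Fin n) (Fin n ⊕ Fin n) ℝ) := by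
  rw [← Matrix.unitaryGroup, Matrix.mem_unitaryGroup_iff, star_eq_conjTranspose, stdJ,
    fromBlocks_conjTranspose, fromBlocks_multiply]
  simp

theorem posDef_sqrt_symplectic_general (n : ℕ)
    (G : Matrix (Fin n ⊕ Fin n) (Fin n ⊕ Fin n) ℝ) (hG : G.PosDef)
    (hsymp : Gᵀ * stdJ n * G = stdJ n) :
    (hG.posSemidef.sqrt)ᵀ * stdJ n * hG.posSemidef.sqrt = stdJ n ∧
      (hG.posSemidef.sqrt).PosDef := by
  have hR : IsStrictlyPositive (CFC.sqrt G) := hG.isStrictlyPositive.sqrt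
  have hRT : (CFC.sqrt G)ᵀ = CFC.sqrt G := (isHermitian_iff_isSymm.mp hR.posDef.isHermitian).eq
  rw [(isHermitian_iff_isSymm.mp hG.isHermitian).eq] at hsymp
  rw [hG.posSemidef.sqrt_eq_cfcSqrt, hRT]
  exact ⟨CFC.sqrt_mul_mul_sqrt_eq_of_mul_mul_eq ⟨stdJ n, stdJ_mem_unitary n⟩
    hG.isStrictlyPositive hsymp, hR.posDef⟩

/-- The positive definite square root of a symmetric positive definite
symplectic matrix is symplectic (and symmetric positive definite). -/
theorem posDef_sqrt_symplectic (n : ℕ)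
    (G : Matrix (Fin n ⊕ Fin n) (Fin n ⊕ Fin n) ℝ) (hGs : G.IsSymm) (hG : G.PosDef)
    (hsymp : Gᵀ * stdJ n * G = stdJ n) :
    (hG.posSemidef.sqrt)ᵀ * stdJ n * hG.posSemidef.sqrt = stdJ n ∧
      (hG.posSemidef.sqrt).PosDef :=
  posDef_sqrt_symplectic_general n G hG hsymp

end
end
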